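/- arXiv:1611.08942 — 2 statements merged into one kernel-verified Lean document; each statement's English description precedes it below -/
import Mathlib

section
/- Let n, m be positive integers and let lb, ub : Fin m → ℤ. Let P be the set of all f : Fin n → Fin m → ℝ such that f i j ≥ 0 for all i, j; Σ_j f i j = 1 for every i; and (lb j : ℝ) ≤ Σ_i f i j ≤ (ub j : ℝ) for every j. Fix i₀ : Fin n, j₀ : Fin m, and v ∈ {0, 1}. If there exists f ∈ P with f i₀ j₀ = v, then there exists f' ∈ P with all entries in {0,1} and f' i₀ j₀ = v. -/
/-!
The column sums `s j = ∑ i, f i j` of a fractional point are reals with total `n` and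
`lb j ≤ s j ≤ ub j`. Rounding each of them down or up to an integer `c j` so that the total
stays `n` keeps these bounds, because `lb j` and `ub j` are integers. Any counts `c` with
total `n` are the bin counts of some assignment of the items, and the item `i₀` can be sent
to any bin of positive count. If `f i₀ j₀ = 1` then `s j₀ ≥ 1`, so `c j₀ ≥ 1`; if
`f i₀ j₀ = 0` then `s j₀ ≤ n - 1`, so `c j₀ < n` and some other bin has positive count.
-/
open Finset

theorem Finset.exists_sum_eq_of_sum_le_of_le_sum {ι : Type*} [DecidableEq ι] (s : Finset ι)
    {L U : ι → ℤ} {N : ℤ}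
    (hLU : ∀ j ∈ s, L j ≤ U j) (hL : ∑ j ∈ s, L j ≤ N) (hU : N ≤ ∑ j ∈ s, U j) :
    ∃ c : ι → ℤ, (∀ j ∈ s, L j ≤ c j ∧ c j ≤ U j) ∧ ∑ j ∈ s, c j = N := by
  induction s using Finset.induction generalizing N with
  | empty => exact ⟨0, by simp, by simp only [sum_empty] at *; omega⟩
  | @insert a s ha ih =>
    rw [sum_insert ha] at hL hU
    have hs : ∑ j ∈ s, L j ≤ ∑ j ∈ s, U j := sum_le_sum fun j hj => hLU j (mem_insert_of_mem hj)
    have hLUa := hLU a (mem_insert_self a s)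
    -- put as little as possible on `a`, so that the rest still fits into `s`
    set ca := max (L a) (N - ∑ j ∈ s, U j)
    obtain ⟨c, hc, hcs⟩ := ih (N := N - ca) (fun j hj => hLU j (mem_insert_of_mem hj))
      (by omega) (by omega)
    refine ⟨Function.update c a ca, ?_, ?_⟩
    · simp only [mem_insert, forall_eq_or_imp, Function.update_self]
      refine ⟨⟨le_max_left _ _, max_le hLUa (by omega)⟩, fun j hj => ?_⟩
      rw [Function.update_of_ne (ne_of_mem_of_not_mem hj ha)]
      exact hc j hj
    · rw [sum_insert ha, Function.update_self, sum_update_of_notMem ha]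
      omega

theorem exists_int_sum_eq_of_floor_le_of_le_ceil {ι : Type*} [Fintype ι] (s : ι → ℝ) {N : ℤ}
    (hs : ∑ j, s j = N) : ∃ c : ι → ℤ, (∀ j, ⌊s j⌋ ≤ c j ∧ c j ≤ ⌈s j⌉) ∧ ∑ j, c j = N := by
  classical
  have hL : ∑ j, ⌊s j⌋ ≤ N := by
    have : ((∑ j, ⌊s j⌋ : ℤ) : ℝ) ≤ N := by
      push_cast; rw [← hs]; exact sum_le_sum fun j _ => Int.floor_le _
    exact_mod_cast this
  have hU : N ≤ ∑ j, ⌈s j⌉ := by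
    have : (N : ℝ) ≤ ((∑ j, ⌈s j⌉ : ℤ) : ℝ) := by
      push_cast; rw [← hs]; exact sum_le_sum fun j _ => Int.le_ceil _
    exact_mod_cast this
  simpa using univ.exists_sum_eq_of_sum_le_of_le_sum (fun j _ => Int.floor_le_ceil (s j)) hL hU

theorem exists_map_card_fiber_eq {ι κ : Type*} [Fintype ι] [Fintype κ] [DecidableEq κ]
    {c : κ → ℕ} (hc : ∑ j, c j = Fintype.card ι) (i₀ : ι) {j₁ : κ} (hj₁ : 0 < c j₁) :
    ∃ a : ι → κ, (∀ j, #{i | a i = j} = c j) ∧ a i₀ = j₁ := by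
  classical
  let e₀ : ι ≃ Σ j, Fin (c j) := Fintype.equivOfCardEq (by simp [hc])
  let e := e₀.trans (Equiv.swap (e₀ i₀) ⟨j₁, ⟨0, hj₁⟩⟩)
  refine ⟨fun i => (e i).1, fun j => ?_, by simp [e]⟩
  calc #{i | (e i).1 = j} = #{x : Σ j, Fin (c j) | x.1 = j} := card_equiv e (by simp)
    _ = c j := by
      rw [card_filter, Fintype.sum_sigma]
      simp [apply_ite card]

theorem exists_ne_pos_of_sum_eq {κ : Type*} [Fintype κ] [DecidableEq κ] {c : κ → ℕ} {N : ℕ}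
    (hc : ∑ j, c j = N) {j₀ : κ} (hj₀ : c j₀ < N) : ∃ j ≠ j₀, 0 < c j := by
  by_contra! h
  have : ∑ j, c j = c j₀ :=
    sum_eq_single j₀ (fun j _ hj => Nat.le_zero.mp (h j hj)) (by simp)
  omega

section

variable {ι κ : Type*} [Fintype ι] [Fintype κ]

def binCountsPolytope (lb ub : κ → ℤ) : Set (ι → κ → ℝ) :=
  {f | (∀ i j, 0 ≤ f i j) ∧ (∀ i, ∑ j, f i j = 1) ∧
    (∀ j, (lb j : ℝ) ≤ ∑ i, f i j ∧ ∑ i, f i j ≤ (ub j : ℝ))}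

variable {lb ub : κ → ℤ} {f : ι → κ → ℝ}

theorem le_one_of_mem_binCountsPolytope (hf : f ∈ binCountsPolytope lb ub) (i : ι) (j : κ) :
    f i j ≤ 1 :=
  hf.2.1 i ▸ single_le_sum (fun j _ => hf.1 i j) (mem_univ j)

theorem sum_col_le_card_sub_one [DecidableEq ι] (hf : f ∈ binCountsPolytope lb ub)
    {i₀ : ι} {j : κ} (h : f i₀ j = 0) : ∑ i, f i j ≤ Fintype.card ι - 1 := by
  calc ∑ i, f i j = ∑ i ∈ univ.erase i₀, f i j := by
        rw [← sum_erase_add _ _ (mem_univ i₀), h, add_zero]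
    _ ≤ #(univ.erase i₀) • (1 : ℝ) :=
        sum_le_card_nsmul _ _ _ fun i _ => le_one_of_mem_binCountsPolytope hf i j
    _ = Fintype.card ι - 1 := by rw [nsmul_one, cast_card_erase_of_mem (mem_univ i₀), card_univ]

theorem exists_rounded_counts_of_mem_binCountsPolytope (hf : f ∈ binCountsPolytope lb ub) :
    ∃ c : κ → ℕ, ∑ j, c j = Fintype.card ι ∧ (∀ j, lb j ≤ c j ∧ (c j : ℤ) ≤ ub j) ∧
      ∀ j, ⌊∑ i, f i j⌋ ≤ c j ∧ (c j : ℤ) ≤ ⌈∑ i, f i j⌉ := by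
  obtain ⟨hnn, hrow, hcol⟩ := hf
  have htotal : ∑ j, ∑ i, f i j = (Fintype.card ι : ℤ) := by
    rw [sum_comm]; simp [hrow]
  obtain ⟨c, hc, hsum⟩ := exists_int_sum_eq_of_floor_le_of_le_ceil _ htotal
  lift c to κ → ℕ using fun j =>
    (Int.floor_nonneg.mpr (sum_nonneg fun i _ => hnn i j)).trans (hc j).1
  refine ⟨c, Nat.cast_injective (R := ℤ) (by simpa using hsum), fun j => ⟨?_, ?_⟩, hc⟩
  · exact (Int.le_floor.mpr (hcol j).1).trans (hc j).1
  · exact (hc j).2.trans (Int.ceil_le.mpr (hcol j).2)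

theorem indicator_mem_binCountsPolytope [DecidableEq κ] {a : ι → κ}
    (ha : ∀ j, lb j ≤ #{i | a i = j} ∧ (#{i | a i = j} : ℤ) ≤ ub j) :
    (fun i j => if a i = j then (1 : ℝ) else 0) ∈ binCountsPolytope lb ub := by
  refine ⟨fun i j => by by_cases h : a i = j <;> simp [h], fun i => by simp, fun j => ?_⟩
  rw [sum_boole]
  exact_mod_cast ha j

end

theorem bin_counts_lp_flow_filtering_correct_general
    (n m : ℕ) (lb ub : Fin m → ℤ)
    (P : Set (Fin n → Fin m → ℝ))
    (hP : P = {f | (∀ i j, 0 ≤ f i j) ∧ (∀ i, ∑ j, f i j = 1) ∧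
      (∀ j, (lb j : ℝ) ≤ ∑ i, f i j ∧ ∑ i, f i j ≤ (ub j : ℝ))})
    (i₀ : Fin n) (j₀ : Fin m) (v : ℝ) (hv : v = 0 ∨ v = 1)
    (hex : ∃ f ∈ P, f i₀ j₀ = v) :
    ∃ f' ∈ P, (∀ i j, f' i j = 0 ∨ f' i j = 1) ∧ f' i₀ j₀ = v := by
  obtain ⟨f, hf, rfl⟩ := hex
  change P = binCountsPolytope lb ub at hP
  subst hP
  obtain ⟨c, hsum, hbounds, hround⟩ := exists_rounded_counts_of_mem_binCountsPolytope hf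
  obtain ⟨j₁, hj₁, hj₁v⟩ : ∃ j₁, 0 < c j₁ ∧ (if j₁ = j₀ then (1 : ℝ) else 0) = f i₀ j₀ := by
    rcases hv with h | h
    · have hceil : ⌈∑ i, f i j₀⌉ ≤ (Fintype.card (Fin n) : ℤ) - 1 :=
        Int.ceil_le.mpr (by push_cast; exact sum_col_le_card_sub_one hf h)
      have hlt : c j₀ < Fintype.card (Fin n) := by have := (hround j₀).2; omega
      obtain ⟨j₁, hne, hpos⟩ := exists_ne_pos_of_sum_eq hsum hlt
      exact ⟨j₁, hpos, by simp [hne, h]⟩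
    · have hone : 1 ≤ ∑ i, f i j₀ := h ▸ single_le_sum (fun i _ => hf.1 i j₀) (mem_univ i₀)
      have := (Int.floor_pos.mpr hone).trans_le (hround j₀).1
      exact ⟨j₀, by exact_mod_cast this, by simp [h]⟩
  obtain ⟨a, hcard, ha⟩ := exists_map_card_fiber_eq hsum i₀ hj₁
  refine ⟨fun i j => if a i = j then 1 else 0, indicator_mem_binCountsPolytope fun j => ?_,
    fun i j => (ite_eq_or_eq _ _ _).symm, by simpa [ha] using hj₁v⟩
  rw [hcard]
  exact hbounds j

/-- If the LP relaxation of the `bin_counts` flow reformulation admits a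
solution with `f i₀ j₀ = v` for `v ∈ {0, 1}`, then it admits a 0–1 solution
with `f' i₀ j₀ = v`. -/
theorem bin_counts_lp_flow_filtering_correct
    (n m : ℕ) (hn : 0 < n) (hm : 0 < m) (lb ub : Fin m → ℤ)
    (P : Set (Fin n → Fin m → ℝ))
    (hP : P = {f | (∀ i j, 0 ≤ f i j) ∧ (∀ i, ∑ j, f i j = 1) ∧
      (∀ j, (lb j : ℝ) ≤ ∑ i, f i j ∧ ∑ i, f i j ≤ (ub j : ℝ))})
    (i₀ : Fin n) (j₀ : Fin m) (v : ℝ) (hv : v = 0 ∨ v = 1)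
    (hex : ∃ f ∈ P, f i₀ j₀ = v) :
    ∃ f' ∈ P, (∀ i j, f' i j = 0 ∨ f' i j = 1) ∧ f' i₀ j₀ = v :=
  bin_counts_lp_flow_filtering_correct_general n m lb ub P hP i₀ j₀ v hv hex
end

section
/- Let n, m be positive integers, let lb, ub : Fin m → ℤ, and let Z and O be arbitrary subsets of Fin n × Fin m. Let Q be the set of all f : Fin n → Fin m → ℝ such that f i j ≥ 0 for all i, j; Σ_j f i j = 1 for every i; (lb j : ℝ) ≤ Σ_i f i j ≤ (ub j : ℝ) for every j; f i j = 0 for all (i, j) ∈ Z; and f i j = 1 for all (i, j) ∈ O. Then every extreme point of Q has all entries in {0,1}. -/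
/-!
Let `f` be a point of the polyhedron with a non-integral entry and let `S` be its set of
non-integral cells. Each row sums to `1`, so a row meeting `S` meets it at least twice; the same
holds for every column whose sum is an integer, which are the only columns whose bounds can be
tight. Hence the row-sum constraints of the rows meeting `S` and the column-sum constraints of
those columns number fewer than `|S|` once one redundant column constraint is dropped (the column
sums and the row sums have the same total), and some nonzero `G` supported on `S` satisfies them
all. Moving `f` along `±G` keeps every constraint for small steps: `G` vanishes where `f` is
integral, in particular on the fixed cells, and a column with non-integral sum lies strictly
between its integer bounds. So `f` is not extreme; extreme points are integral, hence `0`–`1`.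
-/

open Finset Filter Topology

theorem exists_ne_notMem_of_sum_mem {ι G : Type*} [AddCommGroup G] (H : AddSubgroup G)
    {s : Finset ι} {v : ι → G} (hs : ∑ i ∈ s, v i ∈ H) {i : ι} (hi : i ∈ s) (hvi : v i ∉ H) :
    ∃ j ∈ s, j ≠ i ∧ v j ∉ H := by
  classical
  by_contra! h
  have hrest : ∑ j ∈ s.erase i, v j ∈ H :=
    H.sum_mem fun j hj => h j (mem_of_mem_erase hj) (ne_of_mem_erase hj)
  rw [← add_sum_erase s v hi] at hs
  exact hvi ((H.add_mem_cancel_right hrest).mp hs)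

theorem two_mul_card_le_card_filter {α β : Type*} [DecidableEq β] (S : Finset α) (f : α → β)
    (T : Finset β) (hT : ∀ b ∈ T, 1 < #{a ∈ S | f a = b}) : 2 * #T ≤ #{a ∈ S | f a ∈ T} := by
  rw [card_eq_sum_card_fiberwise (s := {a ∈ S | f a ∈ T}) (t := T)
    fun a ha => (mem_filter.mp ha).2, mul_comm, ← smul_eq_mul]
  refine card_nsmul_le_sum _ _ _ fun b hb => ?_
  rw [filter_filter, filter_congr fun a _ => and_iff_right_of_imp fun (h : f a = b) => h ▸ hb]
  exact hT b hb

theorem exists_ne_zero_forall_apply_eq_zero {K V α : Type*} [Field K] [AddCommGroup V]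
    [Module K V] [FiniteDimensional K V] (φ : α → Module.Dual K V) (A : Finset α)
    (hA : #A < Module.finrank K V) : ∃ v ≠ 0, ∀ a ∈ A, φ a v = 0 := by
  obtain ⟨v, hv, hv0⟩ := Submodule.exists_mem_ne_zero_of_ne_bot
    (LinearMap.ker_ne_bot_of_finrank_lt (f := LinearMap.pi fun a : A => φ a) (by simpa using hA))
  exact ⟨v, hv0, fun a ha => congrFun (LinearMap.mem_ker.mp hv) ⟨a, ha⟩⟩

section LineSums

variable (K : Type*) {ι κ : Type*} [Field K] [Fintype ι] [Fintype κ]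

def entryDual (i : ι) (j : κ) : Module.Dual K (ι → κ → K) :=
  LinearMap.proj (R := K) (φ := fun _ : κ => K) j ∘ₗ LinearMap.proj i

def lineSumOrEntryDual : ι ⊕ κ ⊕ (ι × κ) → Module.Dual K (ι → κ → K)
  | .inl i => ∑ j, entryDual K i j
  | .inr (.inl j) => ∑ i, entryDual K i j
  | .inr (.inr p) => entryDual K p.1 p.2

variable {K}

theorem exists_ne_zero_lineSums_eq_zero_except_column (S : Finset (ι × κ)) (C : Set κ) {p₀ : ι × κ}
    (hp₀ : p₀ ∈ S) (hrow : ∀ p ∈ S, ∃ q ∈ S, q ≠ p ∧ q.1 = p.1)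
    (hcol : ∀ p ∈ S, p.2 ∈ C → ∃ q ∈ S, q ≠ p ∧ q.2 = p.2) :
    ∃ G : ι → κ → K, G ≠ 0 ∧ (∀ i j, (i, j) ∉ S → G i j = 0) ∧ (∀ i, ∑ j, G i j = 0) ∧
      ∀ j ∈ C, j ≠ p₀.2 → ∑ i, G i j = 0 := by
  classical
  -- Every line in `R` or `T` carries two cells of `S` and no column of `T` contains `p₀`,
  -- so the constraints indexed by `R`, `T` and `Sᶜ` are fewer than the cells.
  set R := S.image Prod.fst
  set T := ((S.filter (·.2 ∈ C)).image Prod.snd).erase p₀.2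
  have hR : 2 * #R ≤ #S := by
    convert two_mul_card_le_card_filter S Prod.fst R fun i hi => ?_ using 2
    · exact (filter_true_of_mem fun p hp => mem_image_of_mem _ hp).symm
    obtain ⟨p, hp, rfl⟩ := mem_image.mp hi
    obtain ⟨q, hq, hqp, hq1⟩ := hrow p hp
    exact one_lt_card.mpr ⟨p, by simpa using hp, q, by simpa [hq1] using hq, hqp.symm⟩
  have hT : 2 * #T < #S := by
    calc 2 * #T ≤ #{p ∈ S | p.2 ∈ T} := two_mul_card_le_card_filter S Prod.snd T fun j hj => ?_
      _ < #S := card_lt_card (filter_ssubset.mpr ⟨p₀, hp₀, by simp [T]⟩)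
    obtain ⟨p, hp, rfl⟩ := mem_image.mp (mem_of_mem_erase hj)
    obtain ⟨hpS, hpC⟩ := mem_filter.mp hp
    obtain ⟨q, hq, hqp, hq2⟩ := hcol p hpS hpC
    exact one_lt_card.mpr ⟨p, by simpa using hpS, q, by simpa [hq2] using hq, hqp.symm⟩
  obtain ⟨G, hG0, hG⟩ := exists_ne_zero_forall_apply_eq_zero (lineSumOrEntryDual K)
    (R.disjSum (T.disjSum Sᶜ)) (by
      rw [card_disjSum, card_disjSum, card_compl, Module.finrank_pi_fintype]
      simp only [Module.finrank_fintype_fun_eq_card, sum_const, card_univ, smul_eq_mul,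
        ← Fintype.card_prod]
      have := card_le_univ S
      omega)
  have hsupp : ∀ i j, (i, j) ∉ S → G i j = 0 := fun i j hij => by
    simpa [lineSumOrEntryDual, entryDual] using hG (.inr (.inr (i, j))) (by simpa using hij)
  refine ⟨G, hG0, hsupp, fun i => ?_, fun j hj hj₀ => ?_⟩
  · by_cases hi : i ∈ R
    · simpa [lineSumOrEntryDual, entryDual] using hG (.inl i) (by simpa using hi)
    · exact sum_eq_zero fun j _ => hsupp i j fun hij => hi (mem_image_of_mem _ hij)
  · by_cases hjT : j ∈ T
    · simpa [lineSumOrEntryDual, entryDual] using hG (.inr (.inl j)) (by simpa using hjT)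
    · refine sum_eq_zero fun i _ => hsupp i j fun hij => hjT ?_
      exact mem_erase.mpr ⟨hj₀, mem_image.mpr ⟨(i, j), mem_filter.mpr ⟨hij, hj⟩, rfl⟩⟩

theorem exists_ne_zero_lineSums_eq_zero (S : Finset (ι × κ)) (hS : S.Nonempty) (C : Set κ)
    (hrow : ∀ p ∈ S, ∃ q ∈ S, q ≠ p ∧ q.1 = p.1)
    (hcol : ∀ p ∈ S, p.2 ∈ C → ∃ q ∈ S, q ≠ p ∧ q.2 = p.2) :
    ∃ G : ι → κ → K, G ≠ 0 ∧ (∀ i j, (i, j) ∉ S → G i j = 0) ∧ (∀ i, ∑ j, G i j = 0) ∧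
      ∀ j ∈ C, ∑ i, G i j = 0 := by
  -- Drop a column outside `C` if there is one; otherwise every column meeting `S` lies in `C`,
  -- and the dropped column sum is recovered from the others because both double sums agree.
  obtain ⟨p₀, hp₀, hclosed⟩ : ∃ p₀ ∈ S, p₀.2 ∈ C → ∀ p ∈ S, p.2 ∈ C := by
    by_cases h : ∀ p ∈ S, p.2 ∈ C
    · exact hS.imp fun p hp => ⟨hp, fun _ => h⟩
    · push Not at h
      exact h.imp fun p ⟨hp, hpC⟩ => ⟨hp, fun h => absurd h hpC⟩
  obtain ⟨G, hG0, hsupp, hGrow, hGcol⟩ :=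
    exists_ne_zero_lineSums_eq_zero_except_column (K := K) S C hp₀ hrow hcol
  refine ⟨G, hG0, hsupp, hGrow, fun j hj => ?_⟩
  rcases eq_or_ne j p₀.2 with rfl | hj₀
  · have hother : ∀ j ≠ p₀.2, ∑ i, G i j = 0 := by
      intro j hj₀
      by_cases hjS : ∃ i, (i, j) ∈ S
      · obtain ⟨i, hi⟩ := hjS
        exact hGcol j (hclosed hj (i, j) hi) hj₀
      · push Not at hjS
        exact sum_eq_zero fun i _ => hsupp i j (hjS i)
    calc ∑ i, G i p₀.2 = ∑ j, ∑ i, G i j := (sum_eq_single _ (fun j _ => hother j) (by simp)).symm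
      _ = ∑ i, ∑ j, G i j := sum_comm
      _ = 0 := sum_eq_zero fun i _ => hGrow i
  · exact hGcol j hj hj₀

theorem exists_ne_zero_lineSums_eq_zero_of_notMem (H : AddSubgroup K) {f : ι → κ → K}
    (hrow : ∀ i, ∑ j, f i j ∈ H) {i₀ : ι} {j₀ : κ} (h₀ : f i₀ j₀ ∉ H) :
    ∃ G : ι → κ → K, G ≠ 0 ∧ (∀ i j, f i j ∈ H → G i j = 0) ∧ (∀ i, ∑ j, G i j = 0) ∧
      ∀ j, ∑ i, f i j ∈ H → ∑ i, G i j = 0 := by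
  classical
  obtain ⟨G, hG0, hsupp, hGrow, hGcol⟩ := exists_ne_zero_lineSums_eq_zero (K := K)
    {p | f p.1 p.2 ∉ H} ⟨(i₀, j₀), by simpa using h₀⟩ {j | ∑ i, f i j ∈ H}
    (fun p hp => by
      obtain ⟨j, -, hj, hfj⟩ := exists_ne_notMem_of_sum_mem H (hrow p.1) (mem_univ p.2)
        (by simpa using hp)
      exact ⟨(p.1, j), by simpa using hfj, by simp [Prod.ext_iff, hj], rfl⟩)
    (fun p hp hpC => by
      obtain ⟨i, -, hi, hfi⟩ := exists_ne_notMem_of_sum_mem H hpC (mem_univ p.1)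
        (by simpa using hp)
      exact ⟨(i, p.2), by simpa using hfi, by simp [Prod.ext_iff, hi], rfl⟩)
  exact ⟨G, hG0, fun i j h => hsupp i j (by simpa using h), hGrow, hGcol⟩

end LineSums

theorem eventually_add_mul_mem {s : Set ℝ} {a d : ℝ} (h : s ∈ 𝓝 a ∨ a ∈ s ∧ d = 0) :
    ∀ᶠ t in 𝓝 (0 : ℝ), a + t * d ∈ s := by
  rcases h with hs | ⟨ha, rfl⟩
  · exact ((continuous_const.add (continuous_id.mul continuous_const)).tendsto' 0 a
      (by simp)).eventually_mem hs
  · simpa using ha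

theorem notMem_extremePoints_of_eventually_add_smul_mem {E : Type*} [AddCommGroup E]
    [Module ℝ E] {A : Set E} {x v : E} (hv : v ≠ 0) (h : ∀ᶠ t in 𝓝 (0 : ℝ), x + t • v ∈ A) :
    x ∉ A.extremePoints ℝ := by
  intro hx
  have hneg : ∀ᶠ t in 𝓝 (0 : ℝ), x - t • v ∈ A := by
    simpa [sub_eq_add_neg] using (continuous_neg.tendsto' (0 : ℝ) 0 neg_zero).eventually h
  obtain ⟨t, ⟨hadd, hsub⟩, ht⟩ :=
    (((h.and hneg).filter_mono nhdsWithin_le_nhds).and self_mem_nhdsWithin).exists (f := 𝓝[≠] 0)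
  have hx_eq := ((mem_extremePoints.mp hx).2 _ hadd _ hsub (mem_openSegment_add_sub x (t • v))).1
  exact smul_ne_zero ht hv (by simpa using hx_eq)

section Polyhedron

variable {ι κ : Type*} [Fintype ι] [Fintype κ]

def binCountsPolyhedron (lb ub : κ → ℤ) (Z O : Set (ι × κ)) : Set (ι → κ → ℝ) :=
  {f | (∀ i j, 0 ≤ f i j) ∧ (∀ i, ∑ j, f i j = 1) ∧
    (∀ j, (lb j : ℝ) ≤ ∑ i, f i j ∧ ∑ i, f i j ≤ (ub j : ℝ)) ∧
    (∀ p ∈ Z, f p.1 p.2 = 0) ∧ (∀ p ∈ O, f p.1 p.2 = 1)}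

theorem eventually_add_smul_mem_binCountsPolyhedron {lb ub : κ → ℤ} {Z O : Set (ι × κ)}
    {f G : ι → κ → ℝ} (hf : f ∈ binCountsPolyhedron lb ub Z O)
    (hsupp : ∀ i j, f i j ∈ AddSubgroup.zmultiples (1 : ℝ) → G i j = 0)
    (hrow : ∀ i, ∑ j, G i j = 0)
    (hcol : ∀ j, ∑ i, f i j ∈ AddSubgroup.zmultiples (1 : ℝ) → ∑ i, G i j = 0) :
    ∀ᶠ t in 𝓝 (0 : ℝ), f + t • G ∈ binCountsPolyhedron lb ub Z O := by
  obtain ⟨hnonneg, hrowf, hcolf, hZ, hO⟩ := hf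
  have hentries : ∀ᶠ t in 𝓝 (0 : ℝ), ∀ i j, f i j + t * G i j ∈ Set.Ici 0 := by
    simp only [eventually_all]
    intro i j
    refine eventually_add_mul_mem ?_
    rcases (hnonneg i j).lt_or_eq with h | h
    · exact .inl (Ici_mem_nhds h)
    · exact .inr ⟨hnonneg i j, hsupp i j (h ▸ zero_mem _)⟩
  have hcols : ∀ᶠ t in 𝓝 (0 : ℝ),
      ∀ j, ∑ i, f i j + t * ∑ i, G i j ∈ Set.Icc (lb j : ℝ) (ub j) := by
    rw [eventually_all]
    intro j
    refine eventually_add_mul_mem ?_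
    by_cases hj : ∑ i, f i j ∈ AddSubgroup.zmultiples (1 : ℝ)
    · exact .inr ⟨hcolf j, hcol j hj⟩
    · have hne : ∀ k : ℤ, (k : ℝ) ≠ ∑ i, f i j := fun k hk =>
        hj (hk ▸ AddSubgroup.intCast_mem_zmultiples_one k)
      exact .inl (Icc_mem_nhds ((hcolf j).1.lt_of_ne (hne _)) ((hcolf j).2.lt_of_ne' (hne _)))
  filter_upwards [hentries, hcols] with t ht hct
  refine ⟨ht, fun i => ?_, fun j => ?_, fun p hp => ?_, fun p hp => ?_⟩
  · simp [sum_add_distrib, ← mul_sum, hrowf, hrow]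
  · simpa [sum_add_distrib, ← mul_sum] using hct j
  · simp [hZ p hp, hsupp _ _ (hZ p hp ▸ zero_mem _)]
  · simp [hO p hp, hsupp _ _ (by rw [hO p hp]; exact AddSubgroup.mem_zmultiples 1)]

end Polyhedron

theorem eq_zero_or_eq_one_of_mem_zmultiples_one {x : ℝ} (hx : x ∈ AddSubgroup.zmultiples 1)
    (h₀ : 0 ≤ x) (h₁ : x ≤ 1) : x = 0 ∨ x = 1 := by
  obtain ⟨k, rfl⟩ := AddSubgroup.mem_zmultiples_iff.mp hx
  rw [zsmul_one] at h₀ h₁ ⊢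
  have : (0 : ℤ) ≤ k := mod_cast h₀
  have : k ≤ 1 := mod_cast h₁
  obtain rfl | rfl : k = 0 ∨ k = 1 := by omega
  all_goals simp

theorem bin_counts_fixed_polyhedron_extremePoints_zero_one_general
    (n m : ℕ) (lb ub : Fin m → ℤ)
    (Z O : Set (Fin n × Fin m))
    (Q : Set (Fin n → Fin m → ℝ))
    (hQ : Q = {f | (∀ i j, 0 ≤ f i j) ∧ (∀ i, ∑ j, f i j = 1) ∧
      (∀ j, (lb j : ℝ) ≤ ∑ i, f i j ∧ ∑ i, f i j ≤ (ub j : ℝ)) ∧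
      (∀ p ∈ Z, f p.1 p.2 = 0) ∧ (∀ p ∈ O, f p.1 p.2 = 1)}) :
    ∀ f ∈ Set.extremePoints ℝ Q, ∀ i j, f i j = 0 ∨ f i j = 1 := by
  subst hQ
  intro f hf
  have hfQ : f ∈ binCountsPolyhedron lb ub Z O := hf.1
  have hint : ∀ i j, f i j ∈ AddSubgroup.zmultiples (1 : ℝ) := by
    by_contra! ⟨i₀, j₀, h₀⟩
    obtain ⟨G, hG0, hsupp, hGrow, hGcol⟩ := exists_ne_zero_lineSums_eq_zero_of_notMem _
      (fun i => by rw [hfQ.2.1 i]; exact AddSubgroup.mem_zmultiples 1) h₀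
    exact notMem_extremePoints_of_eventually_add_smul_mem hG0
      (eventually_add_smul_mem_binCountsPolyhedron hfQ hsupp hGrow hGcol) hf
  intro i j
  refine eq_zero_or_eq_one_of_mem_zmultiples_one (hint i j) (hfQ.1 i j) ?_
  exact hfQ.2.1 i ▸ single_le_sum (fun j _ => hfQ.1 i j) (mem_univ j)

/-- The feasible region of the `bin_counts` flow reformulation remains integral
under any collection of fixings `f i j = 0` (for `(i,j) ∈ Z`) and `f i j = 1`
(for `(i,j) ∈ O`): every extreme point of the resulting polyhedron is 0–1. -/
theorem bin_counts_fixed_polyhedron_extremePoints_zero_one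
    (n m : ℕ) (hn : 0 < n) (hm : 0 < m) (lb ub : Fin m → ℤ)
    (Z O : Set (Fin n × Fin m))
    (Q : Set (Fin n → Fin m → ℝ))
    (hQ : Q = {f | (∀ i j, 0 ≤ f i j) ∧ (∀ i, ∑ j, f i j = 1) ∧
      (∀ j, (lb j : ℝ) ≤ ∑ i, f i j ∧ ∑ i, f i j ≤ (ub j : ℝ)) ∧
      (∀ p ∈ Z, f p.1 p.2 = 0) ∧ (∀ p ∈ O, f p.1 p.2 = 1)}) :
    ∀ f ∈ Set.extremePoints ℝ Q, ∀ i j, f i j = 0 ∨ f i j = 1 :=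
  bin_counts_fixed_polyhedron_extremePoints_zero_one_general n m lb ub Z O Q hQ
end
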